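/- arXiv:1902.07146 — 2 statements merged into one kernel-verified Lean document; each statement's English description precedes it below -/
import Mathlib

section
/- Let φ, ψ : Ω → ℝ be continuous and normalized, i.e. Σ_{a∈A} e^{φ(ax)} = 1 and Σ_{a∈A} e^{ψ(ax)} = 1 for all x ∈ Ω. Let ρ be a Borel probability measure on Ω such that ∫ f dρ = ∫ Σ_{a∈A} e^{ψ(ax)} f(ax) dρ(x) for every bounded continuous f : Ω → ℝ. Then ∫ (ψ − φ) dρ ≤ |A| · e^{‖φ‖_∞} · ‖e^{ψ} − e^{φ}‖_∞², where ‖·‖_∞ denotes the supremum norm on Ω. -/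
open MeasureTheory Filter Topology
open scoped ENNReal NNReal BigOperators

noncomputable section

/-- The shift map on `Ω = Aℕ`. -/
def shift {A : Type*} (x : ℕ → A) : ℕ → A := fun k => x (k + 1)

/-- Prepend a symbol `a` to `x`. -/
def cons {A : Type*} (a : A) (x : ℕ → A) : ℕ → A := fun k =>
  match k with
  | 0 => a
  | k + 1 => x k

/-- Prepend a word `a ∈ Aⁿ` to `x`. -/
def wcat {A : Type*} {n : ℕ} (a : Fin n → A) (x : ℕ → A) : ℕ → A := fun k =>
  if h : k < n then a ⟨k, h⟩ else x (k - n)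

/-- The metric `d_θ(x,y) = θ^(first disagreement)`. -/
def dtheta {A : Type*} (θ : ℝ) (x y : ℕ → A) : ℝ :=
  letI := Classical.dec (x = y)
  if x = y then 0 else θ ^ sInf {k | x k ≠ y k}

/-- `K : Ωⁿ → ℝ` is separately `d_θ`-Lipschitz with constants `ℓ i`. -/
def SepLip {A : Type*} (θ : ℝ) {n : ℕ} (K : (Fin n → (ℕ → A)) → ℝ) (ℓ : Fin n → ℝ) : Prop :=
  ∀ (x : Fin n → (ℕ → A)) (i : Fin n) (x' : ℕ → A),
    |K x - K (Function.update x i x')| ≤ ℓ i * dtheta θ (x i) x'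

/-- Gaussian concentration bound with constant `C`. -/
def GCB {A : Type*} [MeasurableSpace A] (θ C : ℝ) (μ : Measure (ℕ → A)) : Prop :=
  ∀ (n : ℕ), 1 ≤ n → ∀ (K : (Fin n → (ℕ → A)) → ℝ) (ℓ : Fin n → ℝ), SepLip θ K ℓ →
    ∫ x, Real.exp (K (fun i => shift^[(i : ℕ)] x)) ∂μ ≤
      Real.exp (∫ y, K (fun i => shift^[(i : ℕ)] y) ∂μ) * Real.exp (C * ∑ j, ℓ j ^ 2)

/-- Birkhoff sum `S_n f`. -/
def birk {A : Type*} (f : (ℕ → A) → ℝ) (n : ℕ) (x : ℕ → A) : ℝ :=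
  ∑ i ∈ Finset.range n, f (shift^[i] x)

/-- Variation `var_n(φ)` (as an extended real). -/
def evar {A : Type*} (φ : (ℕ → A) → ℝ) (n : ℕ) : ℝ≥0∞ :=
  ⨆ (x : ℕ → A) (y : ℕ → A) (_ : ∀ i < n, x i = y i), ENNReal.ofReal |φ x - φ y|

/-- `W(φ,x,y)` (as an extended real). -/
def Wpair {A : Type*} (φ : (ℕ → A) → ℝ) (x y : ℕ → A) : ℝ≥0∞ :=
  ⨆ (n : ℕ) (a : Fin n → A), ENNReal.ofReal |birk φ n (wcat a x) - birk φ n (wcat a y)|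

/-- `W_p(φ)` (as an extended real). -/
def Wp {A : Type*} (φ : (ℕ → A) → ℝ) (p : ℕ) : ℝ≥0∞ :=
  ⨆ (x : ℕ → A) (y : ℕ → A) (_ : ∀ i < p, x i = y i), Wpair φ x y

/-- Walters' condition. -/
def Walters {A : Type*} (φ : (ℕ → A) → ℝ) : Prop :=
  (⨆ (x : ℕ → A) (y : ℕ → A), Wpair φ x y) ≠ ⊤ ∧ (∀ p, 0 < Wp φ p) ∧
    Antitone (Wp φ) ∧ Tendsto (Wp φ) atTop (𝓝 0)

/-- Ruelle's transfer operator `P_φ`. -/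
def transfer {A : Type*} [Fintype A] (φ f : (ℕ → A) → ℝ) (x : ℕ → A) : ℝ :=
  ∑ a : A, Real.exp (φ (cons a x)) * f (cons a x)
/-- entropy-type estimate for normalized potentials. -/
theorem stmt12 {A : Type*} [Fintype A] [Nonempty A] [MeasurableSpace A] [TopologicalSpace A]
    [DiscreteTopology A] (hcard : 2 ≤ Fintype.card A)
    (φ ψ : (ℕ → A) → ℝ) (hφc : Continuous φ) (hψc : Continuous ψ)
    (hφn : ∀ x : ℕ → A, ∑ a : A, Real.exp (φ (cons a x)) = 1)
    (hψn : ∀ x : ℕ → A, ∑ a : A, Real.exp (ψ (cons a x)) = 1)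
    (ρ : Measure (ℕ → A)) [IsProbabilityMeasure ρ]
    (hstat : ∀ f : (ℕ → A) → ℝ, Continuous f →
      ∫ x, f x ∂ρ = ∫ x, ∑ a : A, Real.exp (ψ (cons a x)) * f (cons a x) ∂ρ) :
    ∫ x, (ψ x - φ x) ∂ρ ≤
      (Fintype.card A : ℝ) * Real.exp (⨆ x : ℕ → A, |φ x|) *
        (⨆ x : ℕ → A, |Real.exp (ψ x) - Real.exp (φ x)|) ^ 2 := by
  
  have hΩ : Nonempty (ℕ → A) := inferInstance
  set M : ℝ := ⨆ x : ℕ → A, |φ x| with hM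
  set D : ℝ := ⨆ x : ℕ → A, |Real.exp (ψ x) - Real.exp (φ x)| with hD
  have hbddM : BddAbove (Set.range fun x : ℕ → A => |φ x|) :=
    (isCompact_range hφc.abs).bddAbove
  have hbddD : BddAbove (Set.range fun x : ℕ → A => |Real.exp (ψ x) - Real.exp (φ x)|) :=
    (isCompact_range
      (((Real.continuous_exp.comp hψc).sub (Real.continuous_exp.comp hφc)).abs)).bddAbove
  have hMle : ∀ x, |φ x| ≤ M := fun x => le_ciSup hbddM x
  have hDle : ∀ x, |Real.exp (ψ x) - Real.exp (φ x)| ≤ D := fun x => le_ciSup hbddD x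
  have hD0 : (0:ℝ) ≤ D := le_trans (abs_nonneg _) (hDle hΩ.some)
  set C : ℝ := (Fintype.card A : ℝ) * Real.exp M * D ^ 2 with hC
  have hC0 : (0:ℝ) ≤ C := by positivity
  have key : ∀ x : ℕ → A,
      |∑ a : A, Real.exp (ψ (cons a x)) * (ψ (cons a x) - φ (cons a x))| ≤ C := by
    intro x
    set P : A → ℝ := fun a => Real.exp (ψ (cons a x)) with hPdef
    set Q : A → ℝ := fun a => Real.exp (φ (cons a x)) with hQdef
    set R : A → ℝ := fun a => Real.exp (-φ (cons a x)) with hRdef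
    have hPpos : ∀ a, 0 < P a := fun a => Real.exp_pos _
    have hQpos : ∀ a, 0 < Q a := fun a => Real.exp_pos _
    have hRpos : ∀ a, 0 < R a := fun a => Real.exp_pos _
    have hQR : ∀ a, Q a * R a = 1 := by
      intro a
      simp [hQdef, hRdef, ← Real.exp_add]
    have hsumP : ∑ a, P a = 1 := hψn x
    have hsumQ : ∑ a, Q a = 1 := hφn x
    rw [abs_le]
    constructor
    · have h0 : (0:ℝ) ≤ ∑ a : A, P a * (ψ (cons a x) - φ (cons a x)) := by
        have hterm : ∀ a ∈ Finset.univ, P a - Q a ≤ P a * (ψ (cons a x) - φ (cons a x)) := by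
          intro a _
          have h1 : (φ (cons a x) - ψ (cons a x)) + 1 ≤
              Real.exp (φ (cons a x) - ψ (cons a x)) := Real.add_one_le_exp _
          have hmul : Real.exp (φ (cons a x) - ψ (cons a x)) * P a = Q a := by
            simp [hPdef, hQdef, ← Real.exp_add]
          nlinarith [mul_le_mul_of_nonneg_right h1 (hPpos a).le]
        have := Finset.sum_le_sum hterm
        have hsub : ∑ a : A, (P a - Q a) = 0 := by
          rw [Finset.sum_sub_distrib, hsumP, hsumQ]; ring
        linarith [hsub ▸ this]
      linarith
    · have step1 : ∑ a : A, P a * (ψ (cons a x) - φ (cons a x)) ≤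
          ∑ a : A, ((P a - Q a) ^ 2 * R a + (P a - Q a)) := by
        apply Finset.sum_le_sum
        intro a _
        have h1 : (ψ (cons a x) - φ (cons a x)) + 1 ≤
            Real.exp (ψ (cons a x) - φ (cons a x)) := Real.add_one_le_exp _
        have hmul : Real.exp (ψ (cons a x) - φ (cons a x)) * Q a = P a := by
          simp [hPdef, hQdef, ← Real.exp_add]
        have ht : (ψ (cons a x) - φ (cons a x)) * Q a ≤ P a - Q a := by
          nlinarith [mul_le_mul_of_nonneg_right h1 (hQpos a).le]
        have ht2 : (ψ (cons a x) - φ (cons a x)) * Q a * (P a * R a) ≤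
            (P a - Q a) * (P a * R a) :=
          mul_le_mul_of_nonneg_right ht (by positivity)
        have e1 : (ψ (cons a x) - φ (cons a x)) * Q a * (P a * R a) =
            P a * (ψ (cons a x) - φ (cons a x)) := by
          linear_combination (ψ (cons a x) - φ (cons a x)) * P a * hQR a
        have e2 : (P a - Q a) * (P a * R a) = (P a - Q a) ^ 2 * R a + (P a - Q a) := by
          linear_combination (P a - Q a) * hQR a
        linarith [e1 ▸ e2 ▸ ht2]
      have step2 : ∑ a : A, ((P a - Q a) ^ 2 * R a + (P a - Q a)) =
          ∑ a : A, (P a - Q a) ^ 2 * R a := by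
        rw [Finset.sum_add_distrib, Finset.sum_sub_distrib, hsumP, hsumQ]; ring
      have step3 : ∑ a : A, (P a - Q a) ^ 2 * R a ≤ C := by
        have hterm : ∀ a ∈ Finset.univ, (P a - Q a) ^ 2 * R a ≤ D ^ 2 * Real.exp M := by
          intro a _
          have h1 : (P a - Q a) ^ 2 ≤ D ^ 2 := by
            have := hDle (cons a x)
            have habs : |P a - Q a| ≤ D := this
            calc (P a - Q a) ^ 2 = |P a - Q a| ^ 2 := (sq_abs _).symm
              _ ≤ D ^ 2 := by nlinarith [abs_nonneg (P a - Q a)]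
          have h2 : R a ≤ Real.exp M := by
            apply Real.exp_le_exp.mpr
            have := hMle (cons a x)
            have := neg_abs_le (φ (cons a x))
            linarith
          exact mul_le_mul h1 h2 (hRpos a).le (by positivity)
        calc ∑ a : A, (P a - Q a) ^ 2 * R a
            ≤ ∑ _a : A, D ^ 2 * Real.exp M := Finset.sum_le_sum hterm
          _ = (Fintype.card A : ℝ) * (D ^ 2 * Real.exp M) := by
              rw [Finset.sum_const, Finset.card_univ, nsmul_eq_mul]
          _ = C := by rw [hC]; ring
      linarith
  have h := hstat (fun x => ψ x - φ x) (hψc.sub hφc)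
  rw [h]
  calc ∫ x, ∑ a : A, Real.exp (ψ (cons a x)) * (ψ (cons a x) - φ (cons a x)) ∂ρ
      ≤ |∫ x, ∑ a : A, Real.exp (ψ (cons a x)) * (ψ (cons a x) - φ (cons a x)) ∂ρ| :=
        le_abs_self _
    _ ≤ C * (ρ Set.univ).toReal := by
        have := norm_integral_le_of_norm_le_const (μ := ρ)
          (f := fun x => ∑ a : A, Real.exp (ψ (cons a x)) * (ψ (cons a x) - φ (cons a x)))
          (C := C) (Filter.Eventually.of_forall fun x => by
            simpa [Real.norm_eq_abs] using key x)
        simpa [Real.norm_eq_abs] using this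
    _ = C := by simp
end
end

section
/- Let μ be a Borel probability measure on Ω satisfying GCB(C) and let A₀ ⊂ Ω be a Borel set with μ(A₀) > 0. Then for every n ∈ ℕ: ∫ 𝓢_{A₀}(y,n) dμ(y) ≤ 2√(C ln(1/μ(A₀)) / n), where 𝓢_{A₀}(x,n) = (1/n) inf_{y ∈ A₀} Σ_{j=0}^{n−1} d_θ(T^j x, T^j y). -/
open MeasureTheory Filter Topology
open scoped ENNReal NNReal BigOperators

noncomputable section

/-- Shadowing quantity `𝓢_{A₀}(x,n)`. -/
def shad {A : Type*} (θ : ℝ) (A₀ : Set (ℕ → A)) (n : ℕ) (x : ℕ → A) : ℝ :=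
  (1 / (n : ℝ)) * ⨅ y : A₀, ∑ j ∈ Finset.range n, dtheta θ (shift^[j] x) (shift^[j] (y : ℕ → A))

/-!
For `λ ≥ 0`, `K(x₀,…,x_{n-1}) = -λ inf_{y ∈ A₀} ∑ⱼ d_θ(xⱼ, Tʲ y)` is separately `λ`-Lipschitz, since
`d_θ` is an ultrametric. Along orbits `K = -λ n 𝓢_{A₀}(·, n)`, which vanishes on `A₀`, so by Markov's
inequality and the Gaussian concentration bound
`μ(A₀) ≤ ∫ exp(-λ n 𝓢) dμ ≤ exp(-λ n ∫ 𝓢 dμ + C n λ²)`.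
Optimizing over `λ` gives the bound.
-/

lemma le_two_mul_sqrt_of_forall_mul_le_add_mul_sq {a b c : ℝ} (hb : 0 ≤ b)
    (h : ∀ t, 0 ≤ t → t * a ≤ b + c * t ^ 2) : a ≤ 2 * √(b * c) := by
  rcases le_or_gt a 0 with ha | ha
  · exact ha.trans (by positivity)
  rcases le_or_gt c 0 with hc | hc
  · have h' := h ((b + 1) / a) (by positivity)
    rw [div_mul_cancel₀ _ ha.ne'] at h'
    nlinarith [sq_nonneg ((b + 1) / a)]
  · have h' := h (a / (2 * c)) (by positivity)
    suffices (a / 2) ^ 2 ≤ b * c by linarith [Real.le_sqrt_of_sq_le this]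
    field_simp at h' ⊢
    nlinarith

section Dtheta

variable {A : Type*} {θ : ℝ}

@[simp]
lemma dtheta_self (θ : ℝ) (x : ℕ → A) : dtheta θ x x = 0 := by
  simp [dtheta]

lemma dtheta_nonneg (hθ : 0 ≤ θ) (x y : ℕ → A) : 0 ≤ dtheta θ x y := by
  unfold dtheta
  split_ifs <;> positivity

lemma dtheta_comm (θ : ℝ) (x y : ℕ → A) : dtheta θ x y = dtheta θ y x := by
  unfold dtheta
  by_cases h : x = y
  · simp [h]
  · simp only [if_neg h, if_neg (Ne.symm h), ne_comm]

lemma pow_le_dtheta (hθ0 : 0 ≤ θ) (hθ1 : θ ≤ 1) {x y : ℕ → A} {k : ℕ} (h : x k ≠ y k) :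
    θ ^ k ≤ dtheta θ x y := by
  have hxy : x ≠ y := fun hxy => h (congrFun hxy k)
  simp only [dtheta, if_neg hxy]
  exact pow_le_pow_of_le_one hθ0 hθ1 (Nat.sInf_le h)

lemma dtheta_triangle (hθ0 : 0 ≤ θ) (hθ1 : θ ≤ 1) (x y z : ℕ → A) :
    dtheta θ x z ≤ dtheta θ x y + dtheta θ y z := by
  have hxy := dtheta_nonneg hθ0 x y
  have hyz := dtheta_nonneg hθ0 y z
  by_cases hxz : x = z
  · subst hxz
    rw [dtheta_self]
    positivity
  obtain ⟨m, hm, hdxz⟩ : ∃ m, x m ≠ z m ∧ dtheta θ x z = θ ^ m :=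
    ⟨_, Nat.sInf_mem (Function.ne_iff.mp hxz), if_neg hxz⟩
  rw [hdxz]
  by_cases hxym : x m = y m
  · linarith [pow_le_dtheta hθ0 hθ1 (hxym ▸ hm : y m ≠ z m)]
  · linarith [pow_le_dtheta hθ0 hθ1 hxym]

lemma abs_dtheta_sub_dtheta_le (hθ0 : 0 ≤ θ) (hθ1 : θ ≤ 1) (x x' z : ℕ → A) :
    |dtheta θ x z - dtheta θ x' z| ≤ dtheta θ x x' := by
  rw [abs_sub_le_iff]
  constructor
  · linarith [dtheta_triangle hθ0 hθ1 x x' z]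
  · linarith [dtheta_triangle hθ0 hθ1 x' x z, dtheta_comm θ x' x]

end Dtheta

lemma abs_ciInf_sub_ciInf_le {ι : Sort*} [Nonempty ι] {f g : ι → ℝ} {ε : ℝ}
    (hf : BddBelow (Set.range f)) (hg : BddBelow (Set.range g))
    (h : ∀ i, |f i - g i| ≤ ε) : |(⨅ i, f i) - ⨅ i, g i| ≤ ε := by
  have hfg : (⨅ i, f i) - ε ≤ ⨅ i, g i := le_ciInf fun i => by
    linarith [ciInf_le hf i, (abs_sub_le_iff.mp (h i)).1]
  have hgf : (⨅ i, g i) - ε ≤ ⨅ i, f i := le_ciInf fun i => by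
    linarith [ciInf_le hg i, (abs_sub_le_iff.mp (h i)).2]
  rw [abs_sub_le_iff]
  constructor <;> linarith

lemma SepLip.const_mul {A : Type*} {θ : ℝ} {n : ℕ} {K : (Fin n → ℕ → A) → ℝ} {ℓ : Fin n → ℝ}
    (hK : SepLip θ K ℓ) (c : ℝ) : SepLip θ (fun x => c * K x) (fun i => |c| * ℓ i) := by
  intro x i x'
  rw [← mul_sub, abs_mul, mul_assoc]
  exact mul_le_mul_of_nonneg_left (hK x i x') (abs_nonneg c)

section ShadowCost

variable {A : Type*} {θ : ℝ} {A₀ : Set (ℕ → A)} {n : ℕ}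

def shadowCost (θ : ℝ) (A₀ : Set (ℕ → A)) {n : ℕ} (x : Fin n → ℕ → A) : ℝ :=
  ⨅ y : A₀, ∑ j, dtheta θ (x j) (shift^[j] (y : ℕ → A))

lemma bddBelow_range_sum_dtheta (hθ : 0 ≤ θ) (x : Fin n → ℕ → A) :
    BddBelow (Set.range fun y : A₀ => ∑ j, dtheta θ (x j) (shift^[j] (y : ℕ → A))) :=
  ⟨0, by rintro _ ⟨y, rfl⟩; exact Finset.sum_nonneg fun j _ => dtheta_nonneg hθ _ _⟩

lemma shadowCost_nonneg (hθ : 0 ≤ θ) (x : Fin n → ℕ → A) : 0 ≤ shadowCost θ A₀ x :=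
  Real.iInf_nonneg fun _ => Finset.sum_nonneg fun _ _ => dtheta_nonneg hθ _ _

lemma sepLip_shadowCost [Nonempty A₀] (hθ0 : 0 ≤ θ) (hθ1 : θ ≤ 1) :
    SepLip θ (shadowCost θ A₀ (n := n)) 1 := by
  intro x i x'
  rw [Pi.one_apply, one_mul]
  refine abs_ciInf_sub_ciInf_le (bddBelow_range_sum_dtheta hθ0 _)
    (bddBelow_range_sum_dtheta hθ0 _) fun y => ?_
  rw [← Finset.sum_sub_distrib, Fintype.sum_eq_single i fun j hj => by
    rw [Function.update_of_ne hj, sub_self], Function.update_self]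
  exact abs_dtheta_sub_dtheta_le hθ0 hθ1 _ _ _

lemma shad_eq_shadowCost_div (θ : ℝ) (A₀ : Set (ℕ → A)) (n : ℕ) (x : ℕ → A) :
    shad θ A₀ n x = shadowCost θ A₀ (fun i : Fin n => shift^[i] x) / n := by
  rw [shad, shadowCost, one_div, div_eq_inv_mul]
  congr 1
  exact iInf_congr fun y =>
    (Fin.sum_univ_eq_sum_range (fun j => dtheta θ (shift^[j] x) (shift^[j] (y : ℕ → A))) n).symm

lemma shad_nonneg (hθ : 0 ≤ θ) (x : ℕ → A) : 0 ≤ shad θ A₀ n x := by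
  rw [shad_eq_shadowCost_div]
  exact div_nonneg (shadowCost_nonneg hθ _) n.cast_nonneg

lemma shad_eq_zero_of_mem (hθ : 0 ≤ θ) {x : ℕ → A} (hx : x ∈ A₀) : shad θ A₀ n x = 0 := by
  refine le_antisymm ?_ (shad_nonneg hθ x)
  have hx0 := ciInf_le (bddBelow_range_sum_dtheta hθ fun i : Fin n => shift^[i] x) ⟨x, hx⟩
  simp only [dtheta_self, Finset.sum_const_zero] at hx0
  rw [shad_eq_shadowCost_div]
  exact div_nonpos_of_nonpos_of_nonneg hx0 n.cast_nonneg

end ShadowCost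

lemma measureReal_le_integral_exp_neg_mul {Ω : Type*} [MeasurableSpace Ω] {μ : Measure Ω}
    [IsFiniteMeasure μ] {f : Ω → ℝ} {s : Set Ω} {t : ℝ} (hf : AEStronglyMeasurable f μ)
    (hf0 : ∀ x, 0 ≤ f x) (hfs : ∀ x ∈ s, f x = 0) (ht : 0 ≤ t) :
    μ.real s ≤ ∫ x, Real.exp (-(t * f x)) ∂μ := by
  have hle : ∀ x, Real.exp (-(t * f x)) ≤ 1 := fun x =>
    Real.exp_le_one_iff.mpr (neg_nonpos.mpr (mul_nonneg ht (hf0 x)))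
  have hint : Integrable (fun x => Real.exp (-(t * f x))) μ :=
    (integrable_const 1).mono' (Real.continuous_exp.comp_aestronglyMeasurable
      (hf.const_mul t).neg) (.of_forall fun x => by simpa using hle x)
  calc μ.real s ≤ 1 * μ.real {x | 1 ≤ Real.exp (-(t * f x))} := by
        rw [one_mul]
        exact measureReal_mono fun x hx => by simp [hfs x hx]
    _ ≤ _ := mul_meas_ge_le_integral_of_nonneg (.of_forall fun _ => (Real.exp_pos _).le) hint 1

lemma GCB.mul_integral_shad_le {A : Type*} [MeasurableSpace A] {θ C : ℝ}
    {μ : Measure (ℕ → A)} [IsProbabilityMeasure μ] (hGCB : GCB θ C μ) (hθ0 : 0 ≤ θ)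
    (hθ1 : θ ≤ 1) {A₀ : Set (ℕ → A)} (hA₀ : 0 < μ A₀) {n : ℕ} (hn : 1 ≤ n)
    (hint : Integrable (shad θ A₀ n) μ) {t : ℝ} (ht : 0 ≤ t) :
    t * ∫ x, shad θ A₀ n x ∂μ ≤ Real.log (1 / μ.real A₀) / n + C * t ^ 2 := by
  have : Nonempty A₀ := (nonempty_of_measure_ne_zero hA₀.ne').to_subtype
  have hn0 : (0 : ℝ) < n := by exact_mod_cast hn
  have hμA₀ : 0 < μ.real A₀ := ENNReal.toReal_pos hA₀.ne' (measure_ne_top μ A₀)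
  have horbit : ∀ x, -t * shadowCost θ A₀ (fun i : Fin n => shift^[i] x) =
      -(t * n * shad θ A₀ n x) := fun x => by
    rw [shad_eq_shadowCost_div]
    field_simp
  have hconc := hGCB n hn _ _ ((sepLip_shadowCost (A₀ := A₀) hθ0 hθ1).const_mul (-t))
  simp only [horbit, Pi.one_apply, mul_one, abs_neg, abs_of_nonneg ht, Finset.sum_const,
    Finset.card_univ, Fintype.card_fin, nsmul_eq_mul, integral_neg, integral_const_mul,
    ← Real.exp_add] at hconc
  have hmarkov := measureReal_le_integral_exp_neg_mul hint.aestronglyMeasurable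
    (shad_nonneg hθ0) (fun _ => shad_eq_zero_of_mem hθ0) (mul_nonneg ht hn0.le)
  have hlog := Real.log_le_log hμA₀ (hmarkov.trans hconc)
  rw [Real.log_exp] at hlog
  rw [one_div, Real.log_inv, div_add' _ _ _ hn0.ne', le_div_iff₀ hn0]
  linarith

theorem stmt14_general {A : Type*} [MeasurableSpace A]
    (θ : ℝ) (hθ0 : 0 < θ) (hθ1 : θ < 1) (C : ℝ)
    (μ : Measure (ℕ → A)) [IsProbabilityMeasure μ] (hGCB : GCB θ C μ)
    (A₀ : Set (ℕ → A)) (hA₀ : 0 < μ A₀)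
    (n : ℕ) (hn : 1 ≤ n) :
    ∫ y, shad θ A₀ n y ∂μ ≤
      2 * Real.sqrt (C * Real.log (1 / (μ A₀).toReal) / n) := by
  rw [← measureReal_def]
  by_cases hint : Integrable (shad θ A₀ n) μ
  · have hμA₀ : 0 < μ.real A₀ := ENNReal.toReal_pos hA₀.ne' (measure_ne_top μ A₀)
    have hlog : 0 ≤ Real.log (1 / μ.real A₀) / n :=
      div_nonneg (Real.log_nonneg (one_le_one_div hμA₀ measureReal_le_one)) n.cast_nonneg
    have := le_two_mul_sqrt_of_forall_mul_le_add_mul_sq hlog fun t ht =>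
      hGCB.mul_integral_shad_le hθ0.le hθ1.le hA₀ hn hint ht
    rwa [mul_div_assoc, mul_comm C]
  · rw [integral_undef hint]
    positivity

/-- expectation bound for the shadowing quantity. -/
theorem stmt14 {A : Type*} [MeasurableSpace A]
    (θ : ℝ) (hθ0 : 0 < θ) (hθ1 : θ < 1) (C : ℝ) (hC : 0 < C)
    (μ : Measure (ℕ → A)) [IsProbabilityMeasure μ] (hGCB : GCB θ C μ)
    (A₀ : Set (ℕ → A)) (hA₀m : MeasurableSet A₀) (hA₀ : 0 < μ A₀)
    (n : ℕ) (hn : 1 ≤ n) :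
    ∫ y, shad θ A₀ n y ∂μ ≤
      2 * Real.sqrt (C * Real.log (1 / (μ A₀).toReal) / n) :=
  stmt14_general θ hθ0 hθ1 C μ hGCB A₀ hA₀ n hn
end
end
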